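/- Under hypotheses (H0)–(H3), for every ε > 0 there exist constants c, C > 0 (independent of n) such that for all n ≥ 1: P_μ(|χ(X_n) − χ(X_0)| ≥ (ε/2)√n) ≤ c·n^{−(1+δ/2)} and P_μ(|χ(X_n) − χ(X_{n−1})| ≥ (ε/2)√n) ≤ C·n^{−(1+δ/2)}; consequently, with A_n = {|S_n − Σ_{i=1}^n ψ(X_i)| ≥ (ε/2)√n} ∪ {|Z_n − ψ(X_n)| ≥ (ε/2)√n}, the series Σ_{n=1}^∞ P_μ(A_n) converges. -/

import Mathlib

open MeasureTheory ProbabilityTheory Filter Bornology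
open scoped ENNReal NNReal Topology

variable {E : Type*} [MeasurableSpace E] [MetricSpace E] [CompleteSpace E]
  [SecondCountableTopology E] [BorelSpace E]

/-- The Markov operator acting on functions: `Pf(x) = ∫ f(y) π(x, dy)`. -/
noncomputable def Pfun (π : Kernel E E) (f : E → ℝ) : E → ℝ := fun x => ∫ y, f y ∂(π x)

/-- The Markov operator acting on measures (the transfer operator `ν ↦ νP`). -/
noncomputable def Pmeas (π : Kernel E E) (ν : MeasureTheory.Measure E) :
    MeasureTheory.Measure E := ν.bind (fun x => π x)

/-- `ν ∈ M_{1,1}`: a Borel probability measure with finite first moment. -/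
def FiniteFirstMoment (ν : MeasureTheory.Measure E) : Prop :=
  IsProbabilityMeasure ν ∧ ∃ x₀ : E, Integrable (fun x => dist x₀ x) ν

/-- The Wasserstein (dual-Lipschitz) distance between two measures. -/
noncomputable def wassDist (ν₁ ν₂ : MeasureTheory.Measure E) : ℝ :=
  sSup {r : ℝ | ∃ f : E → ℝ, LipschitzWith 1 f ∧ r = |∫ x, f x ∂ν₁ - ∫ x, f x ∂ν₂|}

/-- The natural filtration of the coordinate process on `ℕ → E`. -/
def natFilt : Filtration ℕ (MeasurableSpace.pi : MeasurableSpace (ℕ → E)) :=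
  Filtration.natural (fun k (ω : ℕ → E) => ω k)
    (fun k => (measurable_pi_apply k).stronglyMeasurable)

/-- `ℙ` is the law of the Markov chain on `E^ℕ` with transition probability `π` and
initial distribution `ν`. -/
structure IsMarkovChainLaw (π : Kernel E E) (ν : MeasureTheory.Measure E)
    (P : MeasureTheory.Measure (ℕ → E)) : Prop where
  prob : IsProbabilityMeasure P
  init : P.map (fun ω => ω 0) = ν
  markov : ∀ (n : ℕ) (g : E → ℝ), Measurable g → IsBounded (Set.range g) →
    P[(fun ω => g (ω (n + 1))) | natFilt n] =ᵐ[P] fun ω => ∫ y, g y ∂(π (ω n))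

/-- The corrector function `χ = ∑_{i≥0} Pⁱψ`. -/
noncomputable def chiFun (π : Kernel E E) (ψ : E → ℝ) : E → ℝ :=
  fun x => ∑' i : ℕ, (Pfun π)^[i] ψ x

/-- The martingale `S_n = χ(X_n) - χ(X_0) + ∑_{i=0}^n ψ(X_i)` as a function of the trajectory. -/
noncomputable def SFun (π : Kernel E E) (ψ : E → ℝ) (n : ℕ) : (ℕ → E) → ℝ :=
  fun ω => chiFun π ψ (ω n) - chiFun π ψ (ω 0) + ∑ i ∈ Finset.range (n + 1), ψ (ω i)

/-- The martingale differences `Z_n = χ(X_n) - χ(X_{n-1}) + ψ(X_n)`. -/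
noncomputable def ZFun (π : Kernel E E) (ψ : E → ℝ) (n : ℕ) : (ℕ → E) → ℝ :=
  fun ω => chiFun π ψ (ω n) - chiFun π ψ (ω (n - 1)) + ψ (ω n)

/-! (H2) makes `Pⁿψ` decay geometrically: tested against `δₓPⁿ - δ_yPⁿ` it gives
`|Pⁿψ x - Pⁿψ y| ≤ K max(c,1) γⁿ d(x,y)`, and, `μ*` being invariant with `⟨ψ, μ*⟩ = 0`, against
`δₓPⁿ - μ*Pⁿ` it gives `|Pⁿψ x| ≤ K max(c,1) γⁿ W(δₓ, μ*)`. So the series `χ = ∑ Pⁿψ` converges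
and `χ` is Lipschitz. Each random variable in the statement is then bounded by
`A + L (d(x₀, X_j) + d(x₀, X_k))`, whose moment of order `p = 2 + δ` is bounded uniformly by
(H3); Chebyshev's inequality at level `(ε/2)√n` gives the rate `n^(-p/2) = n^(-(1 + δ/2))`,
which is summable. -/

section LipschitzBounds

variable {X : Type*} [PseudoMetricSpace X] {K : ℝ≥0} {f : X → ℝ}

lemma LipschitzWith.abs_le_abs_add_mul_dist (hf : LipschitzWith K f) (x₀ x : X) :
    |f x| ≤ |f x₀| + K * dist x₀ x := by
  have h := hf.dist_le_mul x x₀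
  rw [Real.dist_eq, dist_comm] at h
  linarith [abs_sub_abs_le_abs_sub (f x) (f x₀)]

lemma LipschitzWith.abs_sub_le_mul_dist_add_dist (hf : LipschitzWith K f) (x₀ x y : X) :
    |f x - f y| ≤ K * dist x₀ x + K * dist x₀ y := by
  rw [← Real.dist_eq, ← mul_add]
  exact (hf.dist_le_mul x y).trans (by gcongr; exact dist_triangle_left x y x₀)

end LipschitzBounds

section Wasserstein

variable {X : Type*} [MeasurableSpace X] [MetricSpace X] {ν ν₁ ν₂ : Measure X}
  {f : X → ℝ} {K : ℝ≥0}

lemma FiniteFirstMoment.integrable_dist [OpensMeasurableSpace X] (hν : FiniteFirstMoment ν)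
    (x : X) : Integrable (fun y => dist x y) ν := by
  obtain ⟨hprob, x₁, hint⟩ := hν
  refine ((integrable_const (dist x x₁)).add hint).mono' (by fun_prop)
    (Eventually.of_forall fun y => ?_)
  rw [Real.norm_of_nonneg dist_nonneg]
  exact dist_triangle x x₁ y

lemma FiniteFirstMoment.dirac [MeasurableSingletonClass X] (x : X) :
    FiniteFirstMoment (Measure.dirac x) :=
  ⟨inferInstance, x, integrable_dirac (by simp)⟩

lemma LipschitzWith.integrable_of_finiteFirstMoment [OpensMeasurableSpace X]
    (hf : LipschitzWith K f) (hν : FiniteFirstMoment ν) : Integrable f ν := by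
  obtain ⟨hprob, x₁, hint⟩ := hν
  exact ((integrable_const |f x₁|).add (hint.const_mul K)).mono'
    hf.continuous.aestronglyMeasurable
    (Eventually.of_forall fun y => hf.abs_le_abs_add_mul_dist x₁ y)

lemma LipschitzWith.abs_integral_sub_le [OpensMeasurableSpace X] (hf : LipschitzWith K f)
    (hν : FiniteFirstMoment ν) (x : X) : |∫ y, f y ∂ν - f x| ≤ K * ∫ y, dist x y ∂ν := by
  have := hν.1
  have hshift : ∫ y, f y ∂ν - f x = ∫ y, (f y - f x) ∂ν := by
    rw [integral_sub (hf.integrable_of_finiteFirstMoment hν) (integrable_const _),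
      integral_const, probReal_univ, one_smul]
  rw [hshift, ← integral_const_mul, ← Real.norm_eq_abs]
  refine norm_integral_le_of_norm_le ((hν.integrable_dist x).const_mul _)
    (Eventually.of_forall fun y => ?_)
  rw [← dist_eq_norm, dist_comm x]
  exact hf.dist_le_mul y x

lemma bddAbove_wassDist [OpensMeasurableSpace X] (hν₁ : FiniteFirstMoment ν₁)
    (hν₂ : FiniteFirstMoment ν₂) :
    BddAbove {r : ℝ | ∃ f : X → ℝ, LipschitzWith 1 f ∧ r = |∫ x, f x ∂ν₁ - ∫ x, f x ∂ν₂|} := by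
  obtain ⟨x, -⟩ := hν₁.2
  refine ⟨(∫ y, dist x y ∂ν₁) + ∫ y, dist x y ∂ν₂, ?_⟩
  rintro r ⟨f, hf, rfl⟩
  have h₁ := hf.abs_integral_sub_le hν₁ x
  have h₂ := hf.abs_integral_sub_le hν₂ x
  rw [NNReal.coe_one, one_mul] at h₁ h₂
  calc |∫ x, f x ∂ν₁ - ∫ x, f x ∂ν₂| = |(∫ x, f x ∂ν₁ - f x) - (∫ x, f x ∂ν₂ - f x)| := by
        ring_nf
    _ ≤ _ := (abs_sub _ _).trans (add_le_add h₁ h₂)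

lemma le_wassDist [OpensMeasurableSpace X] (hν₁ : FiniteFirstMoment ν₁)
    (hν₂ : FiniteFirstMoment ν₂) (hf : LipschitzWith 1 f) :
    |∫ x, f x ∂ν₁ - ∫ x, f x ∂ν₂| ≤ wassDist ν₁ ν₂ :=
  le_csSup (bddAbove_wassDist hν₁ hν₂) ⟨f, hf, rfl⟩

lemma wassDist_nonneg [OpensMeasurableSpace X] (hν₁ : FiniteFirstMoment ν₁)
    (hν₂ : FiniteFirstMoment ν₂) : 0 ≤ wassDist ν₁ ν₂ :=
  (abs_nonneg _).trans (le_wassDist hν₁ hν₂ (LipschitzWith.const' (0 : ℝ)))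

lemma LipschitzWith.abs_integral_sub_integral_le_wassDist [OpensMeasurableSpace X]
    (hf : LipschitzWith K f) (hν₁ : FiniteFirstMoment ν₁) (hν₂ : FiniteFirstMoment ν₂) :
    |∫ x, f x ∂ν₁ - ∫ x, f x ∂ν₂| ≤ K * wassDist ν₁ ν₂ := by
  rcases eq_zero_or_pos K with rfl | hK
  · obtain ⟨x, -⟩ := hν₁.2
    have := hν₁.1; have := hν₂.1
    have hconst : f = fun _ => f x := funext fun y => dist_le_zero.mp (by
      simpa using hf.dist_le_mul y x)
    rw [hconst]
    simp
  · have hg : LipschitzWith 1 fun x => (K : ℝ)⁻¹ * f x := by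
      have h := (lipschitzWith_smul (K : ℝ)⁻¹).comp hf
      rwa [nnnorm_inv, NNReal.nnnorm_eq, inv_mul_cancel₀ hK.ne'] at h
    have := le_wassDist hν₁ hν₂ hg
    rw [integral_const_mul, integral_const_mul, ← mul_sub, abs_mul, abs_inv, NNReal.abs_eq,
      inv_mul_le_iff₀ (by exact_mod_cast hK)] at this
    exact this

lemma wassDist_dirac_le [MeasurableSingletonClass X] (x y : X) :
    wassDist (Measure.dirac x) (Measure.dirac y) ≤ dist x y := by
  refine csSup_le ⟨0, 0, LipschitzWith.const' 0, by simp⟩ ?_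
  rintro r ⟨f, hf, rfl⟩
  rw [integral_dirac, integral_dirac, ← Real.dist_eq]
  simpa using hf.dist_le_mul x y

end Wasserstein

section MarkovOperator

variable {X : Type*} [MeasurableSpace X] {π : Kernel X X}

lemma Pmeas_dirac (π : Kernel X X) (x : X) : Pmeas π (Measure.dirac x) = π x :=
  Measure.dirac_bind π.measurable x

lemma integral_Pmeas [IsSFiniteKernel π] {ν : Measure X} [SFinite ν] {f : X → ℝ}
    (hf : Integrable f (Pmeas π ν)) : ∫ x, f x ∂(Pmeas π ν) = ∫ x, Pfun π f x ∂ν := by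
  change Integrable f (π ∘ₘ ν) at hf
  change ∫ x, f x ∂(π ∘ₘ ν) = _
  rw [Measure.comp_eq_comp_const_apply] at hf ⊢
  rw [Kernel.integral_comp hf, Kernel.const_apply]
  rfl

lemma FiniteFirstMoment.iterate [MetricSpace X]
    (hH1 : ∀ ν : Measure X, FiniteFirstMoment ν → FiniteFirstMoment (Pmeas π ν))
    {ν : Measure X} (hν : FiniteFirstMoment ν) (n : ℕ) : FiniteFirstMoment ((Pmeas π)^[n] ν) :=
  Set.MapsTo.iterate (f := Pmeas π) (s := {ν | FiniteFirstMoment ν}) (fun ν hν => hH1 ν hν) n hν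

end MarkovOperator

section Contraction

variable {X : Type*} [MeasurableSpace X] [MetricSpace X] [OpensMeasurableSpace X]
  {π : Kernel X X} {c γ : ℝ} {K : ℝ≥0} {f : X → ℝ} {ν ν₁ ν₂ : Measure X}
  (hH1 : ∀ ν : Measure X, FiniteFirstMoment ν → FiniteFirstMoment (Pmeas π ν))
  (hH2 : ∀ n : ℕ, 1 ≤ n → ∀ ν₁ ν₂ : Measure X, FiniteFirstMoment ν₁ → FiniteFirstMoment ν₂ →
    wassDist ((Pmeas π)^[n] ν₁) ((Pmeas π)^[n] ν₂) ≤ c * γ ^ n * wassDist ν₁ ν₂)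

include hH2 in
/-- Replacing `c` by `max c 1` extends the contraction estimate to `n = 0`. -/
lemma wassDist_iterate_le (hγ : 0 ≤ γ) (hν₁ : FiniteFirstMoment ν₁)
    (hν₂ : FiniteFirstMoment ν₂) (n : ℕ) :
    wassDist ((Pmeas π)^[n] ν₁) ((Pmeas π)^[n] ν₂) ≤ max c 1 * γ ^ n * wassDist ν₁ ν₂ := by
  have hW := wassDist_nonneg hν₁ hν₂
  rcases Nat.eq_zero_or_pos n with rfl | hn
  · simpa using le_mul_of_one_le_left hW (le_max_right c 1)
  · refine (hH2 n hn _ _ hν₁ hν₂).trans ?_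
    gcongr
    exact le_max_left c 1

include hH1 hH2

lemma abs_integral_iterate_sub_le (hγ : 0 ≤ γ) (hf : LipschitzWith K f)
    (hν₁ : FiniteFirstMoment ν₁) (hν₂ : FiniteFirstMoment ν₂) (n : ℕ) :
    |∫ x, f x ∂((Pmeas π)^[n] ν₁) - ∫ x, f x ∂((Pmeas π)^[n] ν₂)| ≤
      K * (max c 1 * γ ^ n * wassDist ν₁ ν₂) :=
  (hf.abs_integral_sub_integral_le_wassDist (hν₁.iterate hH1 n) (hν₂.iterate hH1 n)).trans
    (by gcongr; exact wassDist_iterate_le hH2 hγ hν₁ hν₂ n)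

lemma lipschitzWith_Pfun [MeasurableSingletonClass X] (hγ : 0 ≤ γ) (hf : LipschitzWith K f) :
    LipschitzWith (K * Real.toNNReal (max c 1 * γ)) (Pfun π f) := by
  refine LipschitzWith.of_dist_le_mul fun x y => ?_
  have h := abs_integral_iterate_sub_le hH1 hH2 hγ hf (.dirac x) (.dirac y) 1
  simp only [Function.iterate_one, Pmeas_dirac] at h
  rw [NNReal.coe_mul, Real.coe_toNNReal _ (by positivity), Real.dist_eq]
  calc |Pfun π f x - Pfun π f y| ≤ K * (max c 1 * γ ^ 1 * wassDist (.dirac x) (.dirac y)) := h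
    _ = K * (max c 1 * γ) * wassDist (.dirac x) (.dirac y) := by ring
    _ ≤ K * (max c 1 * γ) * dist x y := by
      gcongr
      exact wassDist_dirac_le x y

lemma integral_iterate [MeasurableSingletonClass X] [IsSFiniteKernel π] (hγ : 0 ≤ γ)
    (hf : LipschitzWith K f) (hν : FiniteFirstMoment ν) (n : ℕ) :
    ∫ x, f x ∂((Pmeas π)^[n] ν) = ∫ x, (Pfun π)^[n] f x ∂ν := by
  induction n generalizing K f with
  | zero => rfl
  | succ n ih =>
    have := (hν.iterate hH1 n).1
    rw [Function.iterate_succ_apply', integral_Pmeas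
      (hf.integrable_of_finiteFirstMoment ((hν.iterate hH1 n).iterate hH1 1)),
      ih (lipschitzWith_Pfun hH1 hH2 hγ hf), Function.iterate_succ_apply]

lemma Pfun_iterate_eq_integral_dirac [MeasurableSingletonClass X] [IsSFiniteKernel π]
    (hγ : 0 ≤ γ) (hf : LipschitzWith K f) (n : ℕ) (x : X) :
    (Pfun π)^[n] f x = ∫ y, f y ∂((Pmeas π)^[n] (Measure.dirac x)) := by
  rw [integral_iterate hH1 hH2 hγ hf (.dirac x), integral_dirac]

end Contraction

section Corrector

variable {X : Type*} [MeasurableSpace X] [MetricSpace X] [OpensMeasurableSpace X]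
  [MeasurableSingletonClass X] {π : Kernel X X} [IsSFiniteKernel π] {c γ : ℝ} {K : ℝ≥0}
  {ψ : X → ℝ} {μstar : Measure X}
  (hH1 : ∀ ν : Measure X, FiniteFirstMoment ν → FiniteFirstMoment (Pmeas π ν))
  (hH2 : ∀ n : ℕ, 1 ≤ n → ∀ ν₁ ν₂ : Measure X, FiniteFirstMoment ν₁ → FiniteFirstMoment ν₂ →
    wassDist ((Pmeas π)^[n] ν₁) ((Pmeas π)^[n] ν₂) ≤ c * γ ^ n * wassDist ν₁ ν₂)

include hH1 hH2

lemma abs_Pfun_iterate_sub_le (hγ : 0 ≤ γ) (hψ : LipschitzWith K ψ) (n : ℕ) (x y : X) :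
    |(Pfun π)^[n] ψ x - (Pfun π)^[n] ψ y| ≤ K * max c 1 * dist x y * γ ^ n := by
  rw [Pfun_iterate_eq_integral_dirac hH1 hH2 hγ hψ, Pfun_iterate_eq_integral_dirac hH1 hH2 hγ hψ]
  calc _ ≤ K * (max c 1 * γ ^ n * wassDist (.dirac x) (.dirac y)) :=
        abs_integral_iterate_sub_le hH1 hH2 hγ hψ (.dirac x) (.dirac y) n
    _ = K * max c 1 * γ ^ n * wassDist (.dirac x) (.dirac y) := by ring
    _ ≤ K * max c 1 * γ ^ n * dist x y := by
      gcongr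
      exact wassDist_dirac_le x y
    _ = K * max c 1 * dist x y * γ ^ n := by ring

lemma abs_Pfun_iterate_le (hγ : 0 ≤ γ) (hψ : LipschitzWith K ψ) (hμstar : FiniteFirstMoment μstar)
    (hinv : Pmeas π μstar = μstar) (hψ0 : ∫ x, ψ x ∂μstar = 0) (n : ℕ) (x : X) :
    |(Pfun π)^[n] ψ x| ≤ K * max c 1 * wassDist (.dirac x) μstar * γ ^ n := by
  have hfix : ∫ y, ψ y ∂((Pmeas π)^[n] μstar) = 0 := by rw [Function.iterate_fixed hinv, hψ0]
  rw [Pfun_iterate_eq_integral_dirac hH1 hH2 hγ hψ, ← sub_zero (∫ y, ψ y ∂_), ← hfix]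
  calc _ ≤ K * (max c 1 * γ ^ n * wassDist (.dirac x) μstar) :=
        abs_integral_iterate_sub_le hH1 hH2 hγ hψ (.dirac x) hμstar n
    _ = _ := by ring

lemma summable_Pfun_iterate (hγ₀ : 0 ≤ γ) (hγ₁ : γ < 1) (hψ : LipschitzWith K ψ)
    (hμstar : FiniteFirstMoment μstar) (hinv : Pmeas π μstar = μstar)
    (hψ0 : ∫ x, ψ x ∂μstar = 0) (x : X) : Summable fun n => (Pfun π)^[n] ψ x :=
  Summable.of_norm_bounded ((summable_geometric_of_lt_one hγ₀ hγ₁).mul_left _) fun n =>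
    abs_Pfun_iterate_le hH1 hH2 hγ₀ hψ hμstar hinv hψ0 n x

lemma lipschitzWith_chiFun (hγ₀ : 0 ≤ γ) (hγ₁ : γ < 1) (hψ : LipschitzWith K ψ)
    (hμstar : FiniteFirstMoment μstar) (hinv : Pmeas π μstar = μstar)
    (hψ0 : ∫ x, ψ x ∂μstar = 0) :
    LipschitzWith (K * Real.toNNReal (max c 1 / (1 - γ))) (chiFun π ψ) := by
  refine LipschitzWith.of_dist_le_mul fun x y => ?_
  have hsum := summable_Pfun_iterate hH1 hH2 hγ₀ hγ₁ hψ hμstar hinv hψ0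
  have hgeom := (hasSum_geometric_of_lt_one hγ₀ hγ₁).mul_left (K * max c 1 * dist x y)
  rw [NNReal.coe_mul, Real.coe_toNNReal _ (div_nonneg (by positivity) (by linarith)),
    Real.dist_eq, chiFun, chiFun, ← (hsum x).tsum_sub (hsum y), ← Real.norm_eq_abs]
  calc _ ≤ K * max c 1 * dist x y * (1 - γ)⁻¹ :=
        tsum_of_norm_bounded hgeom fun n => abs_Pfun_iterate_sub_le hH1 hH2 hγ₀ hψ n x y
    _ = _ := by ring

end Corrector

section TailBound

variable {Ω : Type*} [MeasurableSpace Ω] {P : Measure Ω} {Y : Ω → ℝ} {p B a : ℝ}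

lemma measure_le_abs_le_of_integral_rpow_le [IsFiniteMeasure P] (hp : 0 ≤ p)
    (hint : Integrable (fun ω => |Y ω| ^ p) P) (hB : ∫ ω, |Y ω| ^ p ∂P ≤ B) (ha : 0 < a) :
    P {ω | a ≤ |Y ω|} ≤ ENNReal.ofReal (B / a ^ p) := by
  have hap : 0 < a ^ p := Real.rpow_pos_of_pos ha p
  have hmarkov := mul_meas_ge_le_integral_of_nonneg
    (Eventually.of_forall fun ω => Real.rpow_nonneg (abs_nonneg (Y ω)) p) hint (a ^ p)
  calc P {ω | a ≤ |Y ω|} ≤ P {ω | a ^ p ≤ |Y ω| ^ p} :=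
        measure_mono fun ω h => Real.rpow_le_rpow ha.le h hp
    _ = ENNReal.ofReal (P.real {ω | a ^ p ≤ |Y ω| ^ p}) :=
        (ofReal_measureReal (measure_ne_top P _)).symm
    _ ≤ ENNReal.ofReal (B / a ^ p) := by
      gcongr
      rw [le_div_iff₀ hap]
      linarith

lemma measure_mul_sqrt_le_abs_le_of_integral_rpow_le [IsFiniteMeasure P] (hp : 0 ≤ p)
    (hint : Integrable (fun ω => |Y ω| ^ p) P) (hB : ∫ ω, |Y ω| ^ p ∂P ≤ B) (ha : 0 < a)
    {t : ℝ} (ht : 0 < t) :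
    P {ω | a * √t ≤ |Y ω|} ≤ ENNReal.ofReal (B / a ^ p * t ^ (-(p / 2))) := by
  have hscale : (a * √t) ^ p = a ^ p * t ^ (p / 2) := by
    rw [Real.mul_rpow ha.le (Real.sqrt_nonneg t), Real.sqrt_eq_rpow, ← Real.rpow_mul ht.le]
    ring_nf
  have h := measure_le_abs_le_of_integral_rpow_le hp hint hB (mul_pos ha (Real.sqrt_pos.mpr ht))
  rwa [hscale, ← div_div, div_eq_mul_inv (B / a ^ p), ← Real.rpow_neg ht.le] at h

lemma add_add_rpow_le {x y z : ℝ} (hx : 0 ≤ x) (hy : 0 ≤ y) (hz : 0 ≤ z) (hp : 1 ≤ p) :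
    (x + y + z) ^ p ≤ 3 ^ (p - 1) * (x ^ p + y ^ p + z ^ p) := by
  have h := Real.rpow_sum_le_const_mul_sum_rpow_of_nonneg (s := Finset.univ) (f := ![x, y, z]) hp
    (by simp [Fin.forall_fin_succ, hx, hy, hz])
  simpa [Fin.sum_univ_three, add_assoc] using h

variable {D : ℕ → Ω → ℝ} {A L : ℝ}

lemma integral_abs_rpow_le_of_abs_le [IsProbabilityMeasure P] (hp : 1 ≤ p)
    (hD : ∀ n ω, 0 ≤ D n ω) (hint : ∀ n, Integrable (fun ω => D n ω ^ p) P) {M : ℝ}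
    (hM : ∀ n, ∫ ω, D n ω ^ p ∂P ≤ M) (hA : 0 ≤ A) (hL : 0 ≤ L) {j k : ℕ} (hY : Measurable Y)
    (hbd : ∀ ω, |Y ω| ≤ A + L * D j ω + L * D k ω) :
    Integrable (fun ω => |Y ω| ^ p) P ∧
      ∫ ω, |Y ω| ^ p ∂P ≤ 3 ^ (p - 1) * (A ^ p + L ^ p * M + L ^ p * M) := by
  set g : Ω → ℝ := fun ω => 3 ^ (p - 1) * (A ^ p + L ^ p * D j ω ^ p + L ^ p * D k ω ^ p)
  have hle : ∀ ω, |Y ω| ^ p ≤ g ω := fun ω => calc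
    |Y ω| ^ p ≤ (A + L * D j ω + L * D k ω) ^ p :=
        Real.rpow_le_rpow (abs_nonneg _) (hbd ω) (by linarith)
    _ ≤ 3 ^ (p - 1) * (A ^ p + (L * D j ω) ^ p + (L * D k ω) ^ p) :=
        add_add_rpow_le hA (mul_nonneg hL (hD j ω)) (mul_nonneg hL (hD k ω)) hp
    _ = g ω := by rw [Real.mul_rpow hL (hD j ω), Real.mul_rpow hL (hD k ω)]
  have hj := (hint j).const_mul (L ^ p)
  have hk := (hint k).const_mul (L ^ p)
  have hjA : Integrable (fun ω => A ^ p + L ^ p * D j ω ^ p) P := (integrable_const _).add hj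
  have hg : Integrable g P := (hjA.add hk).const_mul _
  have hYp : Integrable (fun ω => |Y ω| ^ p) P :=
    hg.mono' (hY.abs.pow_const p).aestronglyMeasurable (Eventually.of_forall fun ω => by
      rw [Real.norm_of_nonneg (Real.rpow_nonneg (abs_nonneg _) p)]
      exact hle ω)
  refine ⟨hYp, (integral_mono hYp hg hle).trans ?_⟩
  simp only [g]
  rw [integral_const_mul, integral_add hjA hk,
    integral_add (integrable_const _) hj, integral_const, integral_const_mul, integral_const_mul]
  have := Real.rpow_nonneg hL p
  gcongr
  · simp
  · exact hM j
  · exact hM k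

lemma exists_tail_bound_of_moment_bounded [IsProbabilityMeasure P] (hp : 1 ≤ p)
    (hD : ∀ n ω, 0 ≤ D n ω) (hint : ∀ n, Integrable (fun ω => D n ω ^ p) P)
    (hM : ∃ M, ∀ n, ∫ ω, D n ω ^ p ∂P ≤ M) (hA : 0 ≤ A) (hL : 0 ≤ L) (ha : 0 < a) :
    ∃ C, 0 < C ∧ ∀ {Y : Ω → ℝ} {j k : ℕ} {t : ℝ}, 0 < t → Measurable Y →
      (∀ ω, |Y ω| ≤ A + L * D j ω + L * D k ω) →
      P {ω | a * √t ≤ |Y ω|} ≤ ENNReal.ofReal (C * t ^ (-(p / 2))) := by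
  obtain ⟨M, hM⟩ := hM
  set B := 3 ^ (p - 1) * (A ^ p + L ^ p * M + L ^ p * M)
  refine ⟨max (B / a ^ p) 1, lt_max_of_lt_right one_pos, fun {Y j k t} ht hY hbd => ?_⟩
  obtain ⟨hYp, hB⟩ := integral_abs_rpow_le_of_abs_le hp hD hint hM hA hL hY hbd
  refine (measure_mul_sqrt_le_abs_le_of_integral_rpow_le (by linarith) hYp hB ha ht).trans ?_
  gcongr
  exact le_max_left _ _

end TailBound

section Martingale

variable {X : Type*} [MeasurableSpace X] (π : Kernel X X) (ψ : X → ℝ) (n : ℕ) (ω : ℕ → X)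

lemma SFun_sub_sum_Icc : SFun π ψ n ω - ∑ i ∈ Finset.Icc 1 n, ψ (ω i) =
      chiFun π ψ (ω n) - chiFun π ψ (ω 0) + ψ (ω 0) := by
  rw [SFun, Finset.range_eq_Ico, Finset.sum_eq_sum_Ico_succ_bot n.succ_pos, zero_add,
    Nat.succ_eq_add_one, Finset.Ico_add_one_right_eq_Icc]
  ring

lemma ZFun_succ_sub :
    ZFun π ψ (n + 1) ω - ψ (ω (n + 1)) = chiFun π ψ (ω (n + 1)) - chiFun π ψ (ω n) := by
  simp [ZFun]

end Martingale

lemma summable_nat_add_one_rpow_neg {q : ℝ} (hq : 1 < q) :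
    Summable fun n : ℕ => ((n : ℝ) + 1) ^ (-q) := by
  simpa using (summable_nat_add_iff 1).mpr (Real.summable_nat_rpow.mpr (neg_lt_neg hq))

theorem chebyshev_bounds_and_borel_cantelli_general
    {E : Type*} [MeasurableSpace E] [MetricSpace E]
    [SecondCountableTopology E] [BorelSpace E]
    (π : Kernel E E) [IsMarkovKernel π] (γ c : ℝ) (hγ : γ ∈ Set.Ioo (0 : ℝ) 1)
    -- (H1): `P` preserves `M_{1,1}`
    (hH1 : ∀ ν : MeasureTheory.Measure E, FiniteFirstMoment ν → FiniteFirstMoment (Pmeas π ν))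
    -- (H2): spectral gap in the Wasserstein metric
    (hH2 : ∀ n : ℕ, 1 ≤ n → ∀ ν₁ ν₂ : MeasureTheory.Measure E, FiniteFirstMoment ν₁ →
      FiniteFirstMoment ν₂ →
      wassDist ((Pmeas π)^[n] ν₁) ((Pmeas π)^[n] ν₂) ≤ c * γ ^ n * wassDist ν₁ ν₂)
    -- the chain: initial distribution `μ ∈ M_{1,1}` and its law `Pμ` on `E^ℕ`
    (μ : MeasureTheory.Measure E)
    (Pμ : MeasureTheory.Measure (ℕ → E)) (hPμ : IsMarkovChainLaw π μ Pμ)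
    -- (H3): uniformly bounded moments of order `2 + δ`
    (x₀ : E) (δ : ℝ) (hδ : 0 < δ)
    (hH3int : ∀ n : ℕ, Integrable (fun ω : ℕ → E => dist x₀ (ω n) ^ (2 + δ)) Pμ)
    (hH3 : ∃ M : ℝ, ∀ n : ℕ, ∫ ω : ℕ → E, dist x₀ (ω n) ^ (2 + δ) ∂Pμ ≤ M)
    -- the unique invariant measure `μ* ∈ M_{1,1}`
    (μstar : MeasureTheory.Measure E) (hμstar : FiniteFirstMoment μstar)
    (hinv : Pmeas π μstar = μstar)
    -- `ψ` is Lipschitz with `⟨ψ, μ*⟩ = 0`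
    (ψ : E → ℝ) (Lψ : ℝ≥0) (hψ : LipschitzWith Lψ ψ) (hψ0 : ∫ x, ψ x ∂μstar = 0) :
    ∀ ε : ℝ, 0 < ε →
      (∃ c' C : ℝ, 0 < c' ∧ 0 < C ∧ ∀ n : ℕ, 1 ≤ n →
        Pμ {ω : ℕ → E | ε / 2 * Real.sqrt (n : ℝ) ≤ |chiFun π ψ (ω n) - chiFun π ψ (ω 0)|} ≤
          ENNReal.ofReal (c' * (n : ℝ) ^ (-(1 + δ / 2))) ∧
        Pμ {ω : ℕ → E | ε / 2 * Real.sqrt (n : ℝ) ≤ |chiFun π ψ (ω n) - chiFun π ψ (ω (n - 1))|} ≤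
          ENNReal.ofReal (C * (n : ℝ) ^ (-(1 + δ / 2)))) ∧
      ∑' n : ℕ, Pμ
        ({ω : ℕ → E | ε / 2 * Real.sqrt ((n : ℝ) + 1) ≤
            |SFun π ψ (n + 1) ω - ∑ i ∈ Finset.Icc 1 (n + 1), ψ (ω i)|} ∪
         {ω : ℕ → E | ε / 2 * Real.sqrt ((n : ℝ) + 1) ≤
            |ZFun π ψ (n + 1) ω - ψ (ω (n + 1))|}) < ⊤ := by
  intro ε hε
  have := hPμ.prob
  obtain ⟨Lχ, hχ⟩ : ∃ Lχ, LipschitzWith Lχ (chiFun π ψ) :=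
    ⟨_, lipschitzWith_chiFun hH1 hH2 hγ.1.le hγ.2 hψ hμstar hinv hψ0⟩
  have hbd : ∀ (ω : ℕ → E) (a b : ℕ), |chiFun π ψ (ω a) - chiFun π ψ (ω b)| + |ψ (ω b)| ≤
      |ψ x₀| + (Lχ + Lψ) * dist x₀ (ω a) + (Lχ + Lψ) * dist x₀ (ω b) := fun ω a b => by
    have := mul_nonneg Lψ.coe_nonneg (dist_nonneg (x := x₀) (y := ω a))
    linarith [hχ.abs_sub_le_mul_dist_add_dist x₀ (ω a) (ω b), hψ.abs_le_abs_add_mul_dist x₀ (ω b)]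
  obtain ⟨C, hC, htail⟩ := exists_tail_bound_of_moment_bounded (P := Pμ)
    (D := fun n ω => dist x₀ (ω n)) (A := |ψ x₀|) (L := Lχ + Lψ) (by linarith)
    (fun _ _ => dist_nonneg) hH3int hH3 (abs_nonneg (ψ x₀)) (by positivity) (half_pos hε)
  rw [show -((2 + δ) / 2) = -(1 + δ / 2) by ring] at htail
  have hχm : Measurable (chiFun π ψ) := hχ.continuous.measurable
  have hψm : Measurable ψ := hψ.continuous.measurable
  refine ⟨⟨C, C, hC, hC, fun n hn => ⟨?_, ?_⟩⟩, ?_⟩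
  · exact htail (by positivity) (by fun_prop) fun ω =>
      le_of_add_le_of_nonneg_left (hbd ω n 0) (abs_nonneg _)
  · exact htail (by positivity) (by fun_prop) fun ω =>
      le_of_add_le_of_nonneg_left (hbd ω n (n - 1)) (abs_nonneg _)
  · refine (ENNReal.tsum_le_tsum fun n => ?_).trans_lt ((summable_nat_add_one_rpow_neg
      (q := 1 + δ / 2) (by linarith)).mul_left (2 * C)).tsum_ofReal_lt_top
    simp only [SFun_sub_sum_Icc, ZFun_succ_sub]
    have ht : (0 : ℝ) < n + 1 := by positivity
    calc _ ≤ _ := measure_union_le _ _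
      _ ≤ ENNReal.ofReal (C * _) + ENNReal.ofReal (C * _) := add_le_add
          (htail ht (by fun_prop) fun ω => (abs_add_le _ _).trans (hbd ω (n + 1) 0))
          (htail ht (by fun_prop) fun ω =>
            le_of_add_le_of_nonneg_left (hbd ω (n + 1) n) (abs_nonneg _))
      _ = _ := by
        rw [← ENNReal.ofReal_add (by positivity) (by positivity)]
        ring_nf

/-- Chebyshev-type bounds for `χ(X_n) - χ(X_0)` and `χ(X_n) - χ(X_{n-1})`, and the
Borel--Cantelli summability of `P_μ(A_n)`. -/
theorem chebyshev_bounds_and_borel_cantelli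
    {E : Type*} [MeasurableSpace E] [MetricSpace E] [CompleteSpace E]
    [SecondCountableTopology E] [BorelSpace E]
    (π : Kernel E E) [IsMarkovKernel π] (γ c : ℝ) (hγ : γ ∈ Set.Ioo (0 : ℝ) 1) (hc : 0 < c)
    -- (H0): the Feller property
    (hH0 : ∀ f : E → ℝ, Continuous f → IsBounded (Set.range f) → Continuous (Pfun π f))
    -- (H1): `P` preserves `M_{1,1}`
    (hH1 : ∀ ν : MeasureTheory.Measure E, FiniteFirstMoment ν → FiniteFirstMoment (Pmeas π ν))
    -- (H2): spectral gap in the Wasserstein metric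
    (hH2 : ∀ n : ℕ, 1 ≤ n → ∀ ν₁ ν₂ : MeasureTheory.Measure E, FiniteFirstMoment ν₁ →
      FiniteFirstMoment ν₂ →
      wassDist ((Pmeas π)^[n] ν₁) ((Pmeas π)^[n] ν₂) ≤ c * γ ^ n * wassDist ν₁ ν₂)
    -- the chain: initial distribution `μ ∈ M_{1,1}` and its law `Pμ` on `E^ℕ`
    (μ : MeasureTheory.Measure E) (hμ : FiniteFirstMoment μ)
    (Pμ : MeasureTheory.Measure (ℕ → E)) (hPμ : IsMarkovChainLaw π μ Pμ)
    -- (H3): uniformly bounded moments of order `2 + δ`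
    (x₀ : E) (δ : ℝ) (hδ : 0 < δ)
    (hH3int : ∀ n : ℕ, Integrable (fun ω : ℕ → E => dist x₀ (ω n) ^ (2 + δ)) Pμ)
    (hH3 : ∃ M : ℝ, ∀ n : ℕ, ∫ ω : ℕ → E, dist x₀ (ω n) ^ (2 + δ) ∂Pμ ≤ M)
    -- the unique invariant measure `μ* ∈ M_{1,1}`
    (μstar : MeasureTheory.Measure E) (hμstar : FiniteFirstMoment μstar)
    (hinv : Pmeas π μstar = μstar)
    (huniq : ∀ ν : MeasureTheory.Measure E, IsProbabilityMeasure ν → Pmeas π ν = ν → ν = μstar)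
    -- `ψ` is Lipschitz with `⟨ψ, μ*⟩ = 0`
    (ψ : E → ℝ) (Lψ : ℝ≥0) (hψ : LipschitzWith Lψ ψ) (hψ0 : ∫ x, ψ x ∂μstar = 0) :
    ∀ ε : ℝ, 0 < ε →
      (∃ c' C : ℝ, 0 < c' ∧ 0 < C ∧ ∀ n : ℕ, 1 ≤ n →
        Pμ {ω : ℕ → E | ε / 2 * Real.sqrt (n : ℝ) ≤ |chiFun π ψ (ω n) - chiFun π ψ (ω 0)|} ≤
          ENNReal.ofReal (c' * (n : ℝ) ^ (-(1 + δ / 2))) ∧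
        Pμ {ω : ℕ → E | ε / 2 * Real.sqrt (n : ℝ) ≤ |chiFun π ψ (ω n) - chiFun π ψ (ω (n - 1))|} ≤
          ENNReal.ofReal (C * (n : ℝ) ^ (-(1 + δ / 2)))) ∧
      ∑' n : ℕ, Pμ
        ({ω : ℕ → E | ε / 2 * Real.sqrt ((n : ℝ) + 1) ≤
            |SFun π ψ (n + 1) ω - ∑ i ∈ Finset.Icc 1 (n + 1), ψ (ω i)|} ∪
         {ω : ℕ → E | ε / 2 * Real.sqrt ((n : ℝ) + 1) ≤
            |ZFun π ψ (n + 1) ω - ψ (ω (n + 1))|}) < ⊤ :=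
  chebyshev_bounds_and_borel_cantelli_general π γ c hγ hH1 hH2 μ Pμ hPμ x₀ δ hδ hH3int hH3 μstar
    hμstar hinv ψ Lψ hψ hψ0
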